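/- Balanced dynamics on the projective plane (Lemma 2.9, diagonal case): Let a_n = diag(1, β_n, γ_n) ∈ GL(3,ℝ) with 0 < γ_n ≤ β_n ≤ 1 for all n, β_n → 0 and γ_n/β_n → 0, acting on ℝP². Then: (1) for every p = [x:y:z] ∈ ℝP² with x ≠ 0, D_{(a_n)}(p) = {[e₁]}; (2) for every p = [0:y:z] with y ≠ 0, D_{(a_n)}(p) equals the projective line {[s:t:0] : (s,t) ≠ (0,0)} spanned by [e₁] and [e₂]; (3) D_{(a_n)}([e₃]) = ℝP². -/

import Mathlib

open Matrix Filter Topology Set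

noncomputable section

/-- `V3` is `ℝ³`. -/
abbrev V3 : Type := Fin 3 → ℝ

/-- The group `GL(3,ℝ)` of invertible `3 × 3` real matrices. -/
abbrev GL3 : Type := (Matrix (Fin 3) (Fin 3) ℝ)ˣ

/-- Nonzero vectors of `ℝ³` up to a nonzero scalar. -/
def projSetoid : Setoid {v : V3 // v ≠ 0} where
  r v w := ∃ c : ℝ, c ≠ 0 ∧ w.1 = c • v.1
  iseqv := by
    refine ⟨fun v => ⟨1, one_ne_zero, (one_smul ℝ v.1).symm⟩, ?_, ?_⟩
    · rintro v w ⟨c, hc, h⟩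
      exact ⟨c⁻¹, inv_ne_zero hc, by rw [h, smul_smul, inv_mul_cancel₀ hc, one_smul]⟩
    · rintro u v w ⟨c, hc, h⟩ ⟨d, hd, h'⟩
      exact ⟨d * c, mul_ne_zero hd hc, by rw [h', h, smul_smul]⟩

/-- The real projective plane `ℝP²`, as the quotient of `ℝ³ \ {0}` by nonzero scalings,
with the quotient topology.  (We use the same model for the dual projective plane `ℝP²*`,
a class `[f₁ : f₂ : f₃]*` of linear forms being recorded through its coefficient
vector `(f₁, f₂, f₃)`; the form acts on vectors by the dot product.) -/
def RP2 : Type := Quotient projSetoid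

/-- The projective class `[v]` of a nonzero vector. -/
def RP2.mk (v : V3) (hv : v ≠ 0) : RP2 := Quotient.mk projSetoid ⟨v, hv⟩

instance : TopologicalSpace RP2 :=
  inferInstanceAs (TopologicalSpace (Quotient projSetoid))

lemma RP2.ind {P : RP2 → Prop} (h : ∀ (v : V3) (hv : v ≠ 0), P (RP2.mk v hv)) (p : RP2) : P p := by
  refine Quotient.ind (fun a => ?_) p
  exact h a.1 a.2

lemma RP2.mk_eq_mk_iff {v w : V3} {hv : v ≠ 0} {hw : w ≠ 0} :
    RP2.mk v hv = RP2.mk w hw ↔ ∃ c : ℝ, c ≠ 0 ∧ w = c • v :=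
  ⟨fun h => Quotient.exact h, fun h => Quotient.sound h⟩

lemma ne_zero_of_coord {v : V3} (i : Fin 3) (h : v i ≠ 0) : v ≠ 0 :=
  fun h0 => h (by rw [h0]; rfl)

/-- The projective class of a vector, defaulting to `[e₁]` for the zero vector. -/
def RP2.mk' (v : V3) : RP2 :=
  if h : v = 0 then RP2.mk ![1, 0, 0] (ne_zero_of_coord 0 (by simp)) else RP2.mk v h

lemma e1_ne : (![1, 0, 0] : V3) ≠ 0 := ne_zero_of_coord 0 (by norm_num)

lemma e3_ne : (![0, 0, 1] : V3) ≠ 0 := ne_zero_of_coord 2 (by simp)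

lemma GL3.mulVec_ne {g : GL3} {v : V3} (hv : v ≠ 0) :
    (g : Matrix (Fin 3) (Fin 3) ℝ) *ᵥ v ≠ 0 := by
  intro h
  apply hv
  have h2 : ((g⁻¹ : GL3) : Matrix (Fin 3) (Fin 3) ℝ) *ᵥ
      ((g : Matrix (Fin 3) (Fin 3) ℝ) *ᵥ v) = 0 := by rw [h, Matrix.mulVec_zero]
  rwa [Matrix.mulVec_mulVec, Units.inv_mul, Matrix.one_mulVec] at h2

/-- The action of `g ∈ GL(3,ℝ)` on `ℝP²`, `g · [v] = [g v]`. -/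
def RP2.mapMat (g : GL3) : RP2 → RP2 :=
  Quotient.lift
    (fun a : {v : V3 // v ≠ 0} =>
      RP2.mk ((g : Matrix (Fin 3) (Fin 3) ℝ) *ᵥ a.1) (GL3.mulVec_ne a.2))
    (by
      rintro a b ⟨c, hc, h⟩
      apply Quotient.sound
      refine ⟨c, hc, ?_⟩
      show (g : Matrix (Fin 3) (Fin 3) ℝ) *ᵥ b.1 = c • ((g : Matrix (Fin 3) (Fin 3) ℝ) *ᵥ a.1)
      rw [h, Matrix.mulVec_smul])

lemma RP2.mapMat_mk (g : GL3) (v : V3) (hv : v ≠ 0) :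
    RP2.mapMat g (RP2.mk v hv) =
      RP2.mk ((g : Matrix (Fin 3) (Fin 3) ℝ) *ᵥ v) (GL3.mulVec_ne hv) := rfl

/-- The element of `GL(3,ℝ)` acting on coefficient vectors of linear forms the way `g`
acts on `ℝP²*`:  the coefficient vector of `f ∘ g⁻¹` is `(g⁻¹)ᵀ` applied to that of `f`. -/
def dualGL (g : GL3) : GL3 where
  val := ((g⁻¹ : GL3) : Matrix (Fin 3) (Fin 3) ℝ)ᵀ
  inv := ((g : GL3) : Matrix (Fin 3) (Fin 3) ℝ)ᵀ
  val_inv := by rw [← Matrix.transpose_mul, Units.mul_inv, Matrix.transpose_one]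
  inv_val := by rw [← Matrix.transpose_mul, Units.inv_mul, Matrix.transpose_one]

/-- The flag space `X`: pairs `([v], [f]) ∈ ℝP² × ℝP²*` with `f(v) = 0`. -/
def FlagSpace : Set (RP2 × RP2) :=
  {x | ∀ (v f : V3) (hv : v ≠ 0) (hf : f ≠ 0),
    x.1 = RP2.mk v hv → x.2 = RP2.mk f hf → f ⬝ᵥ v = 0}

/-- Points of the flag space. -/
abbrev Flag3 : Type := ↥FlagSpace

lemma mem_flagSpace_mk {v f : V3} (hv : v ≠ 0) (hf : f ≠ 0) (h : f ⬝ᵥ v = 0) :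
    (RP2.mk v hv, RP2.mk f hf) ∈ FlagSpace := by
  rintro v' f' hv' hf' hp hq
  obtain ⟨c, hc, hcv⟩ := RP2.mk_eq_mk_iff.1 hp
  obtain ⟨d, hd, hdf⟩ := RP2.mk_eq_mk_iff.1 hq
  rw [hcv, hdf, smul_dotProduct, dotProduct_smul, h]
  simp

lemma dot_invariance (g : GL3) (v f : V3) :
    (((dualGL g : GL3) : Matrix (Fin 3) (Fin 3) ℝ) *ᵥ f) ⬝ᵥ
      ((g : Matrix (Fin 3) (Fin 3) ℝ) *ᵥ v) = f ⬝ᵥ v := by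
  have h1 : ((dualGL g : GL3) : Matrix (Fin 3) (Fin 3) ℝ) *ᵥ f =
      f ᵥ* ((g⁻¹ : GL3) : Matrix (Fin 3) (Fin 3) ℝ) := Matrix.mulVec_transpose _ _
  rw [h1, dotProduct_mulVec, Matrix.vecMul_vecMul, Units.inv_mul, Matrix.vecMul_one]

lemma flagPair_mem (g : GL3) {x : RP2 × RP2} (hx : x ∈ FlagSpace) :
    (RP2.mapMat g x.1, RP2.mapMat (dualGL g) x.2) ∈ FlagSpace := by
  obtain ⟨p, q⟩ := x
  revert hx
  refine Quotient.inductionOn₂ p q ?_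
  rintro ⟨v, hv⟩ ⟨f, hf⟩ hx
  have h0 : f ⬝ᵥ v = 0 := hx v f hv hf rfl rfl
  exact mem_flagSpace_mk _ _ (by rw [dot_invariance]; exact h0)

/-- The action of `g ∈ GL(3,ℝ)` on the flag space,
`g · ([v], [f]) = ([g v], [f ∘ g⁻¹])`. -/
def flagMap (g : GL3) (x : Flag3) : Flag3 :=
  ⟨(RP2.mapMat g x.1.1, RP2.mapMat (dualGL g) x.1.2), flagPair_mem g x.2⟩

/-! ### Composition laws and continuity -/

lemma RP2.mapMat_mapMat (g h : GL3) (p : RP2) :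
    RP2.mapMat g (RP2.mapMat h p) = RP2.mapMat (g * h) p := by
  refine Quotient.inductionOn p fun a => ?_
  apply Quotient.sound
  exact ⟨1, one_ne_zero, by simp [Matrix.mulVec_mulVec, Units.val_mul]⟩

lemma RP2.mapMat_one (p : RP2) : RP2.mapMat 1 p = p := by
  refine Quotient.inductionOn p fun a => ?_
  apply Quotient.sound
  exact ⟨1, one_ne_zero, by simp [Matrix.one_mulVec, Units.val_one]⟩

lemma dualGL_mul (g h : GL3) : dualGL (g * h) = dualGL g * dualGL h := by
  apply Units.ext
  rw [Units.val_mul]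
  show (((g * h)⁻¹ : GL3) : Matrix (Fin 3) (Fin 3) ℝ)ᵀ =
    ((g⁻¹ : GL3) : Matrix (Fin 3) (Fin 3) ℝ)ᵀ * ((h⁻¹ : GL3) : Matrix (Fin 3) (Fin 3) ℝ)ᵀ
  rw [_root_.mul_inv_rev, Units.val_mul, Matrix.transpose_mul]

lemma dualGL_one : dualGL (1 : GL3) = 1 := by
  apply Units.ext
  show (((1 : GL3)⁻¹ : GL3) : Matrix (Fin 3) (Fin 3) ℝ)ᵀ = ((1 : GL3) : Matrix (Fin 3) (Fin 3) ℝ)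
  rw [inv_one, Units.val_one, Matrix.transpose_one]

lemma flagMap_flagMap (g h : GL3) (x : Flag3) :
    flagMap g (flagMap h x) = flagMap (g * h) x := by
  apply Subtype.ext
  apply Prod.ext
  · exact RP2.mapMat_mapMat g h x.1.1
  · show RP2.mapMat (dualGL g) (RP2.mapMat (dualGL h) x.1.2) = RP2.mapMat (dualGL (g * h)) x.1.2
    rw [RP2.mapMat_mapMat, dualGL_mul]

lemma flagMap_one (x : Flag3) : flagMap 1 x = x := by
  apply Subtype.ext
  apply Prod.ext
  · exact RP2.mapMat_one x.1.1
  · show RP2.mapMat (dualGL 1) x.1.2 = x.1.2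
    rw [dualGL_one, RP2.mapMat_one]

lemma continuous_mulVec (M : Matrix (Fin 3) (Fin 3) ℝ) :
    Continuous fun v : V3 => M *ᵥ v := by
  have h : (fun v : V3 => M *ᵥ v) = fun v => fun i => ∑ j, M i j * v j := by
    funext v i
    simp [Matrix.mulVec, dotProduct]
  rw [h]
  exact continuous_pi fun i =>
    continuous_finsetSum _ fun j _ => continuous_const.mul (continuous_apply j)

lemma continuous_mapMat (g : GL3) : Continuous (RP2.mapMat g) := by
  apply Continuous.quotient_lift
  exact continuous_quotient_mk'.comp
    (Continuous.subtype_mk ((continuous_mulVec _).comp continuous_subtype_val) _)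

lemma continuous_flagMap (g : GL3) : Continuous (flagMap g) := by
  apply Continuous.subtype_mk
  exact ((continuous_mapMat g).comp (continuous_fst.comp continuous_subtype_val)).prodMk
    ((continuous_mapMat (dualGL g)).comp (continuous_snd.comp continuous_subtype_val))

/-- The action of `g ∈ GL(3,ℝ)` on the flag space, as a homeomorphism. -/
def flagHomeo (g : GL3) : Flag3 ≃ₜ Flag3 where
  toFun := flagMap g
  invFun := flagMap g⁻¹
  left_inv := fun x => by rw [flagMap_flagMap, inv_mul_cancel, flagMap_one]
  right_inv := fun x => by rw [flagMap_flagMap, mul_inv_cancel, flagMap_one]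
  continuous_toFun := continuous_flagMap g
  continuous_invFun := continuous_flagMap g⁻¹

/-- The group of homeomorphisms of a topological space
(with `(f * g) x = f (g x)`). -/
instance homeoGroup (Z : Type*) [TopologicalSpace Z] : Group (Z ≃ₜ Z) where
  mul f g := g.trans f
  one := Homeomorph.refl Z
  inv := Homeomorph.symm
  mul_assoc _ _ _ := Homeomorph.ext fun _ => rfl
  one_mul _ := Homeomorph.ext fun _ => rfl
  mul_one _ := Homeomorph.ext fun _ => rfl
  inv_mul_cancel f := Homeomorph.ext fun x => f.symm_apply_apply x

/-! ### Geometric objects in the flag space -/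

/-- The α-circle of a point `p ∈ ℝP²`: all flags whose point is `p`. -/
def Cα (p : RP2) : Set Flag3 := {x | x.1.1 = p}

/-- The β-circle of the projective line with defining form (class) `q`:
all flags whose plane is `ker q`. -/
def Cβ (q : RP2) : Set Flag3 := {x | x.1.2 = q}

/-- The plane of the flag `x` contains the direction of the vector `u`. -/
def planeContains (x : Flag3) (u : V3) : Prop :=
  ∀ (f : V3) (hf : f ≠ 0), x.1.2 = RP2.mk f hf → f ⬝ᵥ u = 0

/-- The point of the flag `x` lies on the projective line defined by the linear
form of coefficients `w`. -/
def pointOnForm (x : Flag3) (w : V3) : Prop :=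
  ∀ (v : V3) (hv : v ≠ 0), x.1.1 = RP2.mk v hv → w ⬝ᵥ v = 0

/-- The β-circle of the projective line spanned by the (independent) directions of
`u` and `w`: all flags whose plane contains both. -/
def CβSpan (u w : V3) : Set Flag3 := {x | planeContains x u ∧ planeContains x w}

lemma li_ne_zero_0 {v1 v2 v3 : V3} (h : LinearIndependent ℝ ![v1, v2, v3]) : v1 ≠ 0 := by
  have := h.ne_zero 0; simpa using this

lemma li_ne_zero_1 {v1 v2 v3 : V3} (h : LinearIndependent ℝ ![v1, v2, v3]) : v2 ≠ 0 := by
  have := h.ne_zero 1; simpa using this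

lemma li_ne_zero_2 {v1 v2 v3 : V3} (h : LinearIndependent ℝ ![v1, v2, v3]) : v3 ≠ 0 := by
  have := h.ne_zero 2; simpa using this

/-- The repulsive bouquet of circles `B⁻(g) = C_α([v₃]) ∪ C_β(span(v₂,v₃))` of a
loxodromic element with eigenvectors `v₁, v₂, v₃` (eigenvalues in decreasing order
of modulus). -/
def bouquetMinus (v2 v3 : V3) (h3 : v3 ≠ 0) : Set Flag3 :=
  Cα (RP2.mk v3 h3) ∪ CβSpan v2 v3

/-- The attractive bouquet of circles `B⁺(g) = C_α([v₁]) ∪ C_β(span(v₁,v₂))`. -/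
def bouquetPlus (v1 v2 : V3) (h1 : v1 ≠ 0) : Set Flag3 :=
  Cα (RP2.mk v1 h1) ∪ CβSpan v1 v2

/-- The dynamic set of a point `x` under a sequence of maps `g n`: all limits of
`g (n k) (x k)` for a strictly increasing sequence `(n k)` and a sequence `x k → x`. -/
def DynSet {M : Type*} [TopologicalSpace M] (g : ℕ → M → M) (x : M) : Set M :=
  {y | ∃ φ : ℕ → ℕ, StrictMono φ ∧ ∃ u : ℕ → M,
    Tendsto u atTop (𝓝 x) ∧ Tendsto (fun k => g (φ k) (u k)) atTop (𝓝 y)}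

end

/-!
Lifting convergent sequences of `ℝP²` to `ℝ³` (by orthogonal projection onto the lines), the
dynamics becomes a statement about the vectors `a_n w = (w₀, β_n w₁, γ_n w₂)`. If vectors
`z_k ∝ a_{n_k} w_k` converge to `r` while the ratio of two coordinates of `a_{n_k} w_k` tends
to `0`, then the corresponding coordinate of `r` vanishes: for `w₀ ≠ 0` the ratios are of
order `β` and `γ`, which forces `[r] = [e₁]`; for `w₁ ≠ 0` the ratio is of order `γ / β`, which
forces `r₂ = 0`. Conversely each admissible limit is reached along explicit perturbations
`w_k → v`, whose coordinates are chosen so that a rescaling of `a_k w_k` converges to the target.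
-/

namespace RP2

/-- The orthogonal projection of `ℝ³` onto the line `p`. It depends continuously on `p`, so
`proj (u k) *ᵥ r` lifts a sequence `u k → [r]` to vectors on the lines `u k` converging to `r`. -/
noncomputable def proj : RP2 → Matrix (Fin 3) (Fin 3) ℝ :=
  Quotient.lift (fun a : {v : V3 // v ≠ 0} => (a.1 ⬝ᵥ a.1)⁻¹ • vecMulVec a.1 a.1) (by
    rintro ⟨a, ha⟩ ⟨_, _⟩ ⟨c, hc, rfl⟩
    have haa : a ⬝ᵥ a ≠ 0 := dotProduct_self_eq_zero.not.2 ha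
    simp only [smul_dotProduct, dotProduct_smul, smul_vecMulVec, vecMulVec_smul, smul_smul,
      smul_eq_mul]
    congr 1
    field_simp)

lemma proj_mk (a : V3) (ha : a ≠ 0) : proj (mk a ha) = (a ⬝ᵥ a)⁻¹ • vecMulVec a a := rfl

lemma proj_mk_mulVec (a : V3) (ha : a ≠ 0) (x : V3) :
    proj (mk a ha) *ᵥ x = ((a ⬝ᵥ a)⁻¹ * (a ⬝ᵥ x)) • a := by
  rw [proj_mk, smul_mulVec, vecMulVec_mulVec, op_smul_eq_smul, smul_smul]

lemma proj_mk_mulVec_self (a : V3) (ha : a ≠ 0) : proj (mk a ha) *ᵥ a = a := by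
  rw [proj_mk_mulVec, inv_mul_cancel₀ (dotProduct_self_eq_zero.not.2 ha), one_smul]

lemma continuous_proj : Continuous proj := by
  refine Continuous.quotient_lift (Continuous.smul (M := ℝ) ?_ ?_) _
  · exact (continuous_subtype_val.dotProduct continuous_subtype_val).inv₀
      fun a => dotProduct_self_eq_zero.not.2 a.2
  · exact continuous_subtype_val.matrix_vecMulVec continuous_subtype_val

lemma exists_tendsto_lift {u : ℕ → RP2} {r : V3} (hr : r ≠ 0)
    (hu : Tendsto u atTop (𝓝 (mk r hr))) :
    ∃ z : ℕ → V3, Tendsto z atTop (𝓝 r) ∧ ∀ k (hz : z k ≠ 0), u k = mk (z k) hz := by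
  have hlift : ∀ (p : RP2) (hz : proj p *ᵥ r ≠ 0), p = mk (proj p *ᵥ r) hz :=
    RP2.ind fun a ha hz => mk_eq_mk_iff.2
      ⟨_, left_ne_zero_of_smul (proj_mk_mulVec a ha r ▸ hz), proj_mk_mulVec a ha r⟩
  refine ⟨fun k => proj (u k) *ᵥ r, ?_, fun k => hlift (u k)⟩
  have h := ((continuous_proj.matrix_mulVec (continuous_const (y := r))).tendsto (mk r hr)).comp hu
  rwa [Function.comp_def, proj_mk_mulVec_self] at h

lemma continuousOn_mk' : ContinuousOn mk' {v | v ≠ 0} := by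
  rw [continuousOn_iff_continuous_domRestrict]
  exact continuous_quotient_mk'.congr fun a => (dif_neg a.2 : mk' a.1 = _).symm

lemma tendsto_mk' {l : Filter ℕ} {w : ℕ → V3} {v : V3} (hv : v ≠ 0) (hw : Tendsto w l (𝓝 v)) :
    Tendsto (fun k => mk' (w k)) l (𝓝 (mk v hv)) := by
  rw [show mk v hv = mk' v from (dif_neg hv).symm]
  exact ((continuousOn_mk'.continuousAt (isOpen_ne.mem_nhds hv)).tendsto).comp hw

lemma mk'_smul {c : ℝ} (hc : c ≠ 0) (v : V3) : mk' (c • v) = mk' v := by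
  by_cases hv : v = 0
  · rw [hv, smul_zero]
  · rw [mk', mk', dif_neg (smul_ne_zero hc hv), dif_neg hv]
    exact (mk_eq_mk_iff.2 ⟨c, hc, rfl⟩).symm

lemma mapMat_mk' (g : GL3) {v : V3} (hv : v ≠ 0) :
    mapMat g (mk' v) = mk' ((g : Matrix (Fin 3) (Fin 3) ℝ) *ᵥ v) := by
  rw [mk', mk', dif_neg hv, dif_neg (GL3.mulVec_ne hv), mapMat_mk]

end RP2

section Dynamics

variable {g : ℕ → GL3} {v r : V3}

lemma mem_dynSet_of_tendsto_smul (hv : v ≠ 0) (hr : r ≠ 0) {w : ℕ → V3} {c : ℕ → ℝ}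
    (hw : Tendsto w atTop (𝓝 v))
    (hgw : Tendsto (fun k => c k • ((g k : Matrix (Fin 3) (Fin 3) ℝ) *ᵥ w k)) atTop (𝓝 r)) :
    RP2.mk r hr ∈ DynSet (fun n => RP2.mapMat (g n)) (RP2.mk v hv) := by
  refine ⟨id, strictMono_id, fun k => RP2.mk' (w k), RP2.tendsto_mk' hv hw, ?_⟩
  refine (RP2.tendsto_mk' hr hgw).congr' ?_
  filter_upwards [hw.eventually_ne hv, hgw.eventually_ne hr] with k hwk hgwk
  rw [RP2.mk'_smul (left_ne_zero_of_smul hgwk), RP2.mapMat_mk' _ hwk]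
  rfl

lemma exists_tendsto_smul_of_mem_dynSet (hv : v ≠ 0) (hr : r ≠ 0)
    (hy : RP2.mk r hr ∈ DynSet (fun n => RP2.mapMat (g n)) (RP2.mk v hv)) :
    ∃ φ : ℕ → ℕ, StrictMono φ ∧ ∃ w z : ℕ → V3, Tendsto w atTop (𝓝 v) ∧
      Tendsto z atTop (𝓝 r) ∧
      ∀ᶠ k in atTop, ∃ μ : ℝ, z k = μ • ((g (φ k) : Matrix (Fin 3) (Fin 3) ℝ) *ᵥ w k) := by
  obtain ⟨φ, hφ, u, hu, hgu⟩ := hy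
  obtain ⟨w, hw, hwu⟩ := RP2.exists_tendsto_lift hv hu
  obtain ⟨z, hz, hzu⟩ := RP2.exists_tendsto_lift hr hgu
  refine ⟨φ, hφ, w, z, hw, hz, ?_⟩
  filter_upwards [hw.eventually_ne hv, hz.eventually_ne hr] with k hwk hzk
  have h : RP2.mapMat (g (φ k)) (RP2.mk (w k) hwk) = RP2.mk (z k) hzk := hwu k hwk ▸ hzu k hzk
  rw [RP2.mapMat_mk] at h
  obtain ⟨μ, -, hμ⟩ := RP2.mk_eq_mk_iff.1 h
  exact ⟨μ, hμ⟩

end Dynamics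

lemma eq_zero_of_tendsto_of_smul {ι : Type*} {z x : ℕ → ι → ℝ} {r : ι → ℝ} {i j : ι}
    (hz : Tendsto z atTop (𝓝 r)) (hzx : ∀ᶠ k in atTop, ∃ μ : ℝ, z k = μ • x k)
    (hxi : ∀ᶠ k in atTop, x k i ≠ 0) (hx : Tendsto (fun k => x k j / x k i) atTop (𝓝 0)) :
    r j = 0 := by
  have h := (tendsto_pi_nhds.1 hz i).mul hx
  rw [mul_zero] at h
  refine tendsto_nhds_unique (tendsto_pi_nhds.1 hz j) (h.congr' ?_)
  filter_upwards [hzx, hxi] with k ⟨μ, hμ⟩ hk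
  rw [hμ, Pi.smul_apply, Pi.smul_apply, smul_eq_mul, smul_eq_mul]
  field_simp

lemma tendsto_vec3_iff {u : ℕ → V3} {r : V3} :
    Tendsto u atTop (𝓝 r) ↔ Tendsto (fun k => u k 0) atTop (𝓝 (r 0)) ∧
      Tendsto (fun k => u k 1) atTop (𝓝 (r 1)) ∧ Tendsto (fun k => u k 2) atTop (𝓝 (r 2)) := by
  rw [tendsto_pi_nhds, Fin.forall_fin_succ, Fin.forall_fin_succ, Fin.forall_fin_one]
  rfl

section Diagonal

variable {β γ : ℕ → ℝ} {A : ℕ → GL3} {v : V3}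

lemma diag_mulVec (hA : ∀ n, (A n : Matrix (Fin 3) (Fin 3) ℝ) = diagonal ![1, β n, γ n])
    (n : ℕ) (w : V3) :
    (A n : Matrix (Fin 3) (Fin 3) ℝ) *ᵥ w = ![w 0, β n * w 1, γ n * w 2] := by
  ext i
  fin_cases i <;> simp [hA, mulVec_diagonal]

lemma mem_dynSet_diag (hA : ∀ n, (A n : Matrix (Fin 3) (Fin 3) ℝ) = diagonal ![1, β n, γ n])
    {r : V3} (hv : v ≠ 0) (hr : r ≠ 0) {w : ℕ → V3} (c : ℕ → ℝ) (hw : Tendsto w atTop (𝓝 v))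
    (h0 : Tendsto (fun k => c k * w k 0) atTop (𝓝 (r 0)))
    (h1 : Tendsto (fun k => c k * (β k * w k 1)) atTop (𝓝 (r 1)))
    (h2 : Tendsto (fun k => c k * (γ k * w k 2)) atTop (𝓝 (r 2))) :
    RP2.mk r hr ∈ DynSet (fun n => RP2.mapMat (A n)) (RP2.mk v hv) := by
  refine mem_dynSet_of_tendsto_smul (c := c) hv hr hw (tendsto_vec3_iff.2 ?_)
  simpa only [diag_mulVec hA, Pi.smul_apply, smul_eq_mul, Matrix.cons_val_zero,
    Matrix.cons_val_one, Matrix.cons_val_two] using ⟨h0, h1, h2⟩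

lemma e1_mem_dynSet (hA : ∀ n, (A n : Matrix (Fin 3) (Fin 3) ℝ) = diagonal ![1, β n, γ n])
    (hβ : Tendsto β atTop (𝓝 0)) (hγ : Tendsto γ atTop (𝓝 0)) (hv : v ≠ 0) (hv0 : v 0 ≠ 0) :
    RP2.mk ![1, 0, 0] e1_ne ∈ DynSet (fun n => RP2.mapMat (A n)) (RP2.mk v hv) := by
  refine mem_dynSet_diag hA hv e1_ne (w := fun _ => v) (fun _ => (v 0)⁻¹) tendsto_const_nhds
    ?_ ?_ ?_
  · simp [inv_mul_cancel₀ hv0]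
  · simpa using (hβ.mul_const (v 1)).const_mul (v 0)⁻¹
  · simpa using (hγ.mul_const (v 2)).const_mul (v 0)⁻¹

lemma dynSet_subset_e1 (hA : ∀ n, (A n : Matrix (Fin 3) (Fin 3) ℝ) = diagonal ![1, β n, γ n])
    (hβ : Tendsto β atTop (𝓝 0)) (hγ : Tendsto γ atTop (𝓝 0)) (hv : v ≠ 0) (hv0 : v 0 ≠ 0) :
    DynSet (fun n => RP2.mapMat (A n)) (RP2.mk v hv) ⊆ {RP2.mk ![1, 0, 0] e1_ne} := by
  refine fun y => RP2.ind (P := fun y => y ∈ _ → y ∈ _) (fun r hr hy => ?_) y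
  obtain ⟨φ, hφ, w, z, hw, hz, hzx⟩ := exists_tendsto_smul_of_mem_dynSet hv hr hy
  simp only [diag_mulVec hA] at hzx
  have hw0 : ∀ᶠ k in atTop, w k 0 ≠ 0 := (tendsto_pi_nhds.1 hw 0).eventually_ne hv0
  have hdiv (i : Fin 3) : Tendsto (fun k => w k i / w k 0) atTop (𝓝 (v i / v 0)) :=
    (tendsto_pi_nhds.1 hw i).div (tendsto_pi_nhds.1 hw 0) hv0
  have hr1 : r 1 = 0 := eq_zero_of_tendsto_of_smul (i := 0) hz hzx hw0 (by
    simpa [mul_div_assoc] using (hβ.comp hφ.tendsto_atTop).mul (hdiv 1))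
  have hr2 : r 2 = 0 := eq_zero_of_tendsto_of_smul (i := 0) hz hzx hw0 (by
    simpa [mul_div_assoc] using (hγ.comp hφ.tendsto_atTop).mul (hdiv 2))
  have hr0 : r 0 ≠ 0 := fun hr0 => hr (by ext i; fin_cases i <;> simp [hr0, hr1, hr2])
  exact (RP2.mk_eq_mk_iff.2 ⟨r 0, hr0, by ext i; fin_cases i <;> simp [hr1, hr2]⟩).symm

def lineE12 : Set RP2 := {q | ∃ (s t : ℝ) (h : (![s, t, 0] : V3) ≠ 0), q = RP2.mk ![s, t, 0] h}

lemma dynSet_subset_line (hA : ∀ n, (A n : Matrix (Fin 3) (Fin 3) ℝ) = diagonal ![1, β n, γ n])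
    (hβ0 : ∀ n, β n ≠ 0) (hratio : Tendsto (fun n => γ n / β n) atTop (𝓝 0)) (hv : v ≠ 0)
    (hv1 : v 1 ≠ 0) :
    DynSet (fun n => RP2.mapMat (A n)) (RP2.mk v hv) ⊆ lineE12 := by
  refine fun y => RP2.ind (P := fun y => y ∈ _ → y ∈ _) (fun r hr hy => ?_) y
  obtain ⟨φ, hφ, w, z, hw, hz, hzx⟩ := exists_tendsto_smul_of_mem_dynSet hv hr hy
  simp only [diag_mulVec hA] at hzx
  have hw1 : ∀ᶠ k in atTop, β (φ k) * w k 1 ≠ 0 :=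
    ((tendsto_pi_nhds.1 hw 1).eventually_ne hv1).mono fun k hk => mul_ne_zero (hβ0 _) hk
  have hr2 : r 2 = 0 := eq_zero_of_tendsto_of_smul (i := 1) hz hzx hw1 (by
    simpa [mul_div_mul_comm] using (hratio.comp hφ.tendsto_atTop).mul
      ((tendsto_pi_nhds.1 hw 2).div (tendsto_pi_nhds.1 hw 1) hv1))
  have hr' : ![r 0, r 1, 0] = r := by ext i; fin_cases i <;> simp [hr2]
  exact ⟨r 0, r 1, hr'.symm ▸ hr, RP2.mk_eq_mk_iff.2 ⟨1, one_ne_zero, by rw [one_smul, hr']⟩⟩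

lemma line_subset_dynSet (hA : ∀ n, (A n : Matrix (Fin 3) (Fin 3) ℝ) = diagonal ![1, β n, γ n])
    (hβpos : ∀ n, 0 < β n) (hγpos : ∀ n, 0 < γ n) (hγβ : ∀ n, γ n ≤ β n)
    (hβ : Tendsto β atTop (𝓝 0)) (hratio : Tendsto (fun n => γ n / β n) atTop (𝓝 0))
    (hv : v ≠ 0) (hv0 : v 0 = 0) (hv1 : v 1 ≠ 0) :
    lineE12 ⊆ DynSet (fun n => RP2.mapMat (A n)) (RP2.mk v hv) := by
  rintro _ ⟨s, t, hst, rfl⟩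
  rcases eq_or_ne t 0 with rfl | ht
  · -- No multiple of `β⁻¹` reaches `[e₁]`; the scaling `1 / √β` kills both other coordinates.
    set σ : ℕ → ℝ := fun n => √(β n)
    have hσ : Tendsto σ atTop (𝓝 0) := by simpa using hβ.sqrt
    have hσ0 (n : ℕ) : σ n ≠ 0 := (Real.sqrt_pos.2 (hβpos n)).ne'
    have hσσ (n : ℕ) : β n = σ n * σ n := (Real.mul_self_sqrt (hβpos n).le).symm
    have hγσ : Tendsto (fun n => γ n / σ n) atTop (𝓝 0) :=
      squeeze_zero (fun n => div_nonneg (hγpos n).le (Real.sqrt_nonneg _))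
        (fun n => by rw [div_le_iff₀ (Real.sqrt_pos.2 (hβpos n)), ← hσσ]; exact hγβ n) hσ
    refine mem_dynSet_diag hA hv hst (w := fun k => ![σ k * s, v 1, v 2]) (fun k => (σ k)⁻¹)
      (tendsto_vec3_iff.2 ⟨?_, tendsto_const_nhds, tendsto_const_nhds⟩) ?_ ?_ ?_
    · simpa [hv0] using hσ.mul_const s
    · simp [inv_mul_cancel_left₀ (hσ0 _)]
    · simpa [hσσ, mul_assoc, inv_mul_cancel_left₀ (hσ0 _)] using hσ.mul_const (v 1)
    · simpa [div_eq_inv_mul, mul_assoc] using hγσ.mul_const (v 2)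
  · refine mem_dynSet_diag hA hv hst (w := fun k => ![β k * (s * v 1 / t), v 1, v 2])
      (fun k => t / (β k * v 1))
      (tendsto_vec3_iff.2 ⟨?_, tendsto_const_nhds, tendsto_const_nhds⟩) ?_ ?_ ?_
    · simpa [hv0] using hβ.mul_const (s * v 1 / t)
    · refine tendsto_const_nhds.congr fun k => ?_
      simp only [Matrix.cons_val_zero]
      field_simp [(hβpos k).ne']
    · refine tendsto_const_nhds.congr fun k => ?_
      simp only [Matrix.cons_val_one, Matrix.cons_val_zero]
      field_simp [(hβpos k).ne']
    · have h := hratio.mul_const (t * v 2 / v 1)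
      rw [zero_mul] at h
      refine h.congr fun k => ?_
      simp only [Matrix.cons_val_two, Matrix.tail_cons, Matrix.head_cons]
      field_simp [(hβpos k).ne']

lemma mem_dynSet_e3_of_two_eq_zero
    (hA : ∀ n, (A n : Matrix (Fin 3) (Fin 3) ℝ) = diagonal ![1, β n, γ n])
    (hβpos : ∀ n, 0 < β n) (hγpos : ∀ n, 0 < γ n) (hβ : Tendsto β atTop (𝓝 0))
    (hratio : Tendsto (fun n => γ n / β n) atTop (𝓝 0)) {r : V3} (hr : r ≠ 0) (hr2 : r 2 = 0) :
    RP2.mk r hr ∈ DynSet (fun n => RP2.mapMat (A n)) (RP2.mk ![0, 0, 1] e3_ne) := by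
  -- `ρ = √(γ / β)` is chosen so that the third coordinate `γ / (β ρ)` equals `ρ → 0`.
  set ρ : ℕ → ℝ := fun n => √(γ n / β n)
  have hρ : Tendsto ρ atTop (𝓝 0) := by simpa using hratio.sqrt
  have hρ0 (n : ℕ) : ρ n ≠ 0 := (Real.sqrt_pos.2 (div_pos (hγpos n) (hβpos n))).ne'
  have hγρ (n : ℕ) : γ n = β n * ρ n * ρ n := by
    rw [mul_assoc, Real.mul_self_sqrt (div_pos (hγpos n) (hβpos n)).le,
      mul_div_cancel₀ _ (hβpos n).ne']
  refine mem_dynSet_diag hA e3_ne hr (w := fun k => ![β k * ρ k * r 0, ρ k * r 1, 1])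
    (fun k => (β k * ρ k)⁻¹) (tendsto_vec3_iff.2 ⟨?_, ?_, tendsto_const_nhds⟩) ?_ ?_ ?_
  · simpa using (hβ.mul hρ).mul_const (r 0)
  · simpa using hρ.mul_const (r 1)
  · refine tendsto_const_nhds.congr fun k => ?_
    simp only [Matrix.cons_val_zero]
    field_simp [(hβpos k).ne', hρ0 k]
  · refine tendsto_const_nhds.congr fun k => ?_
    simp only [Matrix.cons_val_one, Matrix.cons_val_zero]
    field_simp [(hβpos k).ne', hρ0 k]
  · rw [hr2]
    refine hρ.congr fun k => ?_
    simp only [Matrix.cons_val_two, Matrix.tail_cons, Matrix.head_cons, hγρ k]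
    field_simp [(hβpos k).ne', hρ0 k]

lemma mem_dynSet_e3_of_two_ne_zero
    (hA : ∀ n, (A n : Matrix (Fin 3) (Fin 3) ℝ) = diagonal ![1, β n, γ n])
    (hβpos : ∀ n, 0 < β n) (hγpos : ∀ n, 0 < γ n) (hγ : Tendsto γ atTop (𝓝 0))
    (hratio : Tendsto (fun n => γ n / β n) atTop (𝓝 0)) {r : V3} (hr : r ≠ 0) (hr2 : r 2 ≠ 0) :
    RP2.mk r hr ∈ DynSet (fun n => RP2.mapMat (A n)) (RP2.mk ![0, 0, 1] e3_ne) := by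
  -- Here `a_k w_k = (γ_k / r₂) • r` exactly.
  refine mem_dynSet_diag hA e3_ne hr
    (w := fun k => ![γ k * (r 0 / r 2), γ k / β k * (r 1 / r 2), 1]) (fun k => r 2 / γ k)
    (tendsto_vec3_iff.2 ⟨?_, ?_, tendsto_const_nhds⟩) ?_ ?_ ?_
  · simpa using hγ.mul_const (r 0 / r 2)
  · simpa using hratio.mul_const (r 1 / r 2)
  · refine tendsto_const_nhds.congr fun k => ?_
    simp only [Matrix.cons_val_zero]
    field_simp [(hγpos k).ne']
  · refine tendsto_const_nhds.congr fun k => ?_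
    simp only [Matrix.cons_val_one, Matrix.cons_val_zero]
    field_simp [(hβpos k).ne', (hγpos k).ne']
  · refine tendsto_const_nhds.congr fun k => ?_
    simp only [Matrix.cons_val_two, Matrix.tail_cons, Matrix.head_cons]
    field_simp [(hγpos k).ne']

lemma mem_dynSet_e3 (hA : ∀ n, (A n : Matrix (Fin 3) (Fin 3) ℝ) = diagonal ![1, β n, γ n])
    (hβpos : ∀ n, 0 < β n) (hγpos : ∀ n, 0 < γ n) (hβ : Tendsto β atTop (𝓝 0))
    (hγ : Tendsto γ atTop (𝓝 0)) (hratio : Tendsto (fun n => γ n / β n) atTop (𝓝 0))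
    (r : V3) (hr : r ≠ 0) :
    RP2.mk r hr ∈ DynSet (fun n => RP2.mapMat (A n)) (RP2.mk ![0, 0, 1] e3_ne) := by
  rcases eq_or_ne (r 2) 0 with hr2 | hr2
  · exact mem_dynSet_e3_of_two_eq_zero hA hβpos hγpos hβ hratio hr hr2
  · exact mem_dynSet_e3_of_two_ne_zero hA hβpos hγpos hγ hratio hr hr2

end Diagonal

/-- Lemma 2.9 (balanced dynamics on the projective plane, diagonal case). -/
theorem balanced_rp2_dynamics
    (β γ : ℕ → ℝ) (hpos : ∀ n, 0 < γ n ∧ γ n ≤ β n ∧ β n ≤ 1)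
    (hβ : Filter.Tendsto β Filter.atTop (nhds 0))
    (hratio : Filter.Tendsto (fun n => γ n / β n) Filter.atTop (nhds 0))
    (A : ℕ → GL3)
    (hA : ∀ n, (A n : Matrix (Fin 3) (Fin 3) ℝ) = Matrix.diagonal ![1, β n, γ n]) :
    (∀ (v : V3) (hv : v ≠ 0), v 0 ≠ 0 →
      DynSet (fun n => RP2.mapMat (A n)) (RP2.mk v hv) = {RP2.mk ![1, 0, 0] e1_ne}) ∧
    (∀ (v : V3) (hv : v ≠ 0), v 0 = 0 → v 1 ≠ 0 →
      DynSet (fun n => RP2.mapMat (A n)) (RP2.mk v hv) =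
        {q : RP2 | ∃ (s t : ℝ) (h : (![s, t, 0] : V3) ≠ 0), q = RP2.mk ![s, t, 0] h}) ∧
    DynSet (fun n => RP2.mapMat (A n)) (RP2.mk ![0, 0, 1] e3_ne) = Set.univ := by
  have hγpos (n : ℕ) : 0 < γ n := (hpos n).1
  have hγβ (n : ℕ) : γ n ≤ β n := (hpos n).2.1
  have hβpos (n : ℕ) : 0 < β n := (hγpos n).trans_le (hγβ n)
  have hγ : Tendsto γ atTop (𝓝 0) := squeeze_zero (fun n => (hγpos n).le) hγβ hβ
  refine ⟨fun v hv hv0 => ?_, fun v hv hv0 hv1 => ?_, ?_⟩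
  · exact (dynSet_subset_e1 hA hβ hγ hv hv0).antisymm
      (singleton_subset_iff.2 (e1_mem_dynSet hA hβ hγ hv hv0))
  · exact (dynSet_subset_line hA (fun n => (hβpos n).ne') hratio hv hv1).antisymm
      (line_subset_dynSet hA hβpos hγpos hγβ hβ hratio hv hv0 hv1)
  · exact eq_univ_of_forall (RP2.ind (mem_dynSet_e3 hA hβpos hγpos hβ hγ hratio))
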